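/- arXiv:2111.15516 — 3 statements merged into one kernel-verified Lean document; each statement's English description precedes it below -/
import Mathlib

section
/- Let (V, val) be a valued K-vector space with valuation-preserving scalar multiplication, γ ∈ Γ, and v_1, ..., v_n ∈ V with val(v_i) = γ for all i. Then W_n(v_1, ..., v_n) (K-linear value-independence) holds if and only if the images of v_1, ..., v_n in the rib B(V, γ) = V^γ / V_γ are K-linearly independent. -/
/-- Vectors `v₁, …, vₙ` of common value `γ` are `K`-linearly value-independent iff their
images in the rib `B(V,γ) = V^γ / V_γ` are `K`-linearly independent.  (Since the `vᵢ` lie in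
`V^γ`, linear independence of their images in `V^γ/V_γ` is equivalent to linear independence
of their images in `V/V_γ`, which is how we phrase it; `Vlt` ranges over the submodule whose
underlying set is `V_γ = {x | val x > γ}`.) -/
theorem valued_vs_windep_iff_rib_independent {K V Γ : Type*} [Field K] [AddCommGroup V]
    [Module K V] [LinearOrder Γ]
    (val : V → WithTop Γ)
    (h0 : ∀ x, val x = ⊤ ↔ x = 0)
    (hmin : ∀ x y, min (val x) (val y) ≤ val (x - y))
    (hscal : ∀ (k : K), k ≠ 0 → ∀ x, val (k • x) = val x)
    (γ : Γ) {n : ℕ} (v : Fin n → V)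
    (hv : ∀ i, val (v i) = (γ : WithTop Γ)) :
    ∀ Vlt : Submodule K V, (Vlt : Set V) = {x | (γ : WithTop Γ) < val x} →
      (((∀ i j, val (v i) = val (v j)) ∧
        ∀ k : Fin n → K, (∀ j, val (v j) < val (∑ i, k i • v i)) → ∀ i, k i = 0)
      ↔ LinearIndependent K fun i => Vlt.mkQ (v i)) := by
  intro Vlt hVlt
  have hmem : ∀ x, x ∈ Vlt ↔ (γ : WithTop Γ) < val x := by
    intro x
    constructor
    · intro h
      have : x ∈ (Vlt : Set V) := h
      rwa [hVlt] at this
    · intro h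
      show x ∈ (Vlt : Set V)
      rw [hVlt]; exact h
  have hsum : ∀ k : Fin n → K,
      (∑ i, k i • Vlt.mkQ (v i)) = Vlt.mkQ (∑ i, k i • v i) := by
    intro k
    rw [map_sum]
    simp [map_smul]
  rw [Fintype.linearIndependent_iff]
  constructor
  · rintro ⟨-, hW⟩ g hg
    have hmem' : (∑ i, g i • v i) ∈ Vlt := by
      rw [← Submodule.Quotient.mk_eq_zero, ← Submodule.mkQ_apply, ← hsum g]
      exact hg
    exact hW g fun j => by rw [hv j]; exact (hmem _).mp hmem'
  · intro hind
    refine ⟨fun i j => by rw [hv i, hv j], fun k hk i => ?_⟩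
    refine hind k ?_ i
    have hmem' : (∑ i, k i • v i) ∈ Vlt := (hmem _).mpr (by rw [← hv i]; exact hk i)
    rw [hsum k, Submodule.mkQ_apply, Submodule.Quotient.mk_eq_zero]
    exact hmem'
end

section
/- Let V be a K-vector space and n ≥ 1. The family of all K-subspaces of V of dimension at most n, viewed as a set system on V, cannot shatter any set of n + 1 vectors. That is, for any vectors v_0, ..., v_n ∈ V there is a subset A ⊆ {v_0, ..., v_n} such that no subspace W of dimension ≤ n satisfies W ∩ {v_0,...,v_n} = A. -/
/-!
If `v₀, …, vₙ` are linearly independent, no subspace of dimension `≤ n` contains all of them.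
Otherwise some `vᵢ` lies in the span of the others, and every subspace containing the others
contains `vᵢ` as well, so the set of the other vectors is not cut out.
-/

open Set Submodule

theorem LinearIndependent.card_le_rank_of_range_subset {R V ι : Type*} [Ring R]
    [StrongRankCondition R] [AddCommGroup V] [Module R V] [Fintype ι] {v : ι → V}
    (hv : LinearIndependent R v) {W : Submodule R V} (h : range v ⊆ W) :
    (Fintype.card ι : Cardinal) ≤ Module.rank R W :=
  calc (Fintype.card ι : Cardinal)
      = Module.rank R (span R (range v)) := by
        classical
        have := nontrivial_of_invariantBasisNumber R
        rw [rank_span hv, Cardinal.mk_fintype, Set.card_range_of_injective hv.injective]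
    _ ≤ Module.rank R W := Submodule.rank_mono (span_le.mpr h)

theorem Submodule.span_inter_subset_of_inter_eq {R V : Type*} [Semiring R] [AddCommMonoid V]
    [Module R V] {W : Submodule R V} {s T : Set V} (h : (W : Set V) ∩ T = s) :
    (span R s : Set V) ∩ T ⊆ s := by
  subst h
  exact inter_subset_inter_left T (span_le.mpr inter_subset_left)

theorem subspaces_cannot_shatter_general {K V : Type*} [Field K] [AddCommGroup V] [Module K V]
    (n : ℕ) (v : Fin (n + 1) → V) (hv : Function.Injective v) :
    ∃ A ⊆ Set.range v, ∀ W : Submodule K V,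
      Module.rank K W ≤ (n : Cardinal) → (W : Set V) ∩ Set.range v ≠ A := by
  by_cases hli : LinearIndependent K v
  · refine ⟨range v, subset_rfl, fun W hW h => ?_⟩
    have hcard := (hli.card_le_rank_of_range_subset (h ▸ inter_subset_left)).trans hW
    simp only [Fintype.card_fin, Nat.cast_le] at hcard
    omega
  · obtain ⟨i, hi⟩ : ∃ i, v i ∈ span K (v '' (univ \ {i})) := by
      simpa [linearIndependent_iff_notMem_span] using hli
    refine ⟨v '' (univ \ {i}), image_subset_range _ _, fun W _ h => ?_⟩
    obtain ⟨j, hj, hji⟩ := span_inter_subset_of_inter_eq h ⟨hi, mem_range_self i⟩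
    exact hj.2 (hv hji)

/-- The family of `K`-subspaces of dimension at most `n` cannot shatter a set of `n + 1`
vectors: for any distinct vectors `v₀, …, vₙ` there is a subset `A ⊆ {v₀, …, vₙ}` such that
no subspace `W` of dimension `≤ n` satisfies `W ∩ {v₀, …, vₙ} = A`. -/
theorem subspaces_cannot_shatter {K V : Type*} [Field K] [AddCommGroup V] [Module K V]
    (n : ℕ) (hn : 1 ≤ n) (v : Fin (n + 1) → V) (hv : Function.Injective v) :
    ∃ A ⊆ Set.range v, ∀ W : Submodule K V,
      Module.rank K W ≤ (n : Cardinal) → (W : Set V) ∩ Set.range v ≠ A :=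
  subspaces_cannot_shatter_general n v hv
end

section
/- Let (V, val) be a valued K-vector space with valuation-preserving scalar multiplication. If v, v', v_1, ..., v_n ∈ V satisfy W_n(v_1,...,v_n), ¬W_{n+1}(v, v_1,...,v_n), val(v) = val(v') = val(v_1), and val(v - v') > val(v) (so v and v' have the same image in the skeleton), then the lambda-coordinates agree: for each i, λ_{n,i}(v, v_1,...,v_n) = λ_{n,i}(v', v_1,...,v_n), where λ_{n,i}(v, v̄) is the unique tuple of scalars with val(Σ_i λ_i v_i - v) > val(v). In other words, the lambda-functions factor through the skeleton S(V). -/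
/-- The lambda-functions factor through the skeleton: if `W_n(v₁,…,vₙ)`,
`¬W_{n+1}(v, v₁,…,vₙ)`, `val v = val v' = val v₁` and `val (v - v') > val v` (so `v` and `v'`
have the same image in the skeleton), then the lambda-coordinates of `v` and `v'` with respect
to `v₁,…,vₙ` agree: any scalars `k, k'` with `val (∑ kᵢ vᵢ - v) > val v` and
`val (∑ k'ᵢ vᵢ - v') > val v'` coincide. -/
theorem valued_vs_lambda_factors_through_skeleton {K V Γ : Type*} [Field K] [AddCommGroup V]
    [Module K V] [LinearOrder Γ]
    (val : V → WithTop Γ)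
    (h0 : ∀ x, val x = ⊤ ↔ x = 0)
    (hmin : ∀ x y, min (val x) (val y) ≤ val (x - y))
    (hscal : ∀ (k : K), k ≠ 0 → ∀ x, val (k • x) = val x)
    {n : ℕ} (v v' : V) (w : Fin n → V)
    (hW : (∀ i j, val (w i) = val (w j)) ∧
      ∀ k : Fin n → K, (∀ j, val (w j) < val (∑ i, k i • w i)) → ∀ i, k i = 0)
    (hnW : ¬ ((∀ i j : Fin (n + 1), val ((Fin.cons v w : Fin (n + 1) → V) i) = val ((Fin.cons v w : Fin (n + 1) → V) j)) ∧
      ∀ k : Fin (n + 1) → K,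
        (∀ j, val ((Fin.cons v w : Fin (n + 1) → V) j) < val (∑ i, k i • (Fin.cons v w : Fin (n + 1) → V) i)) → ∀ i, k i = 0))
    (hvw : ∀ j, val v = val (w j)) (hv' : val v' = val v)
    (hclose : val v < val (v - v'))
    (k k' : Fin n → K)
    (hk : val v < val (∑ i, k i • w i - v))
    (hk' : val v' < val (∑ i, k' i • w i - v')) :
    ∀ i, k i = k' i := by
  have hneg : ∀ x : V, val (-x) = val x := by
    intro x
    have := hscal (-1 : K) (by norm_num) x
    simpa using this
  have key : ∀ i, k i - k' i = 0 := by
    apply hW.2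
    intro j
    have heq : ∑ i, (k i - k' i) • w i =
        ((∑ i, k i • w i - v) - (∑ i, k' i • w i - v')) - (-(v - v')) := by
      simp only [sub_smul, Finset.sum_sub_distrib]
      abel
    rw [heq]
    have h1 : val v < val ((∑ i, k i • w i - v) - (∑ i, k' i • w i - v')) := by
      calc val v < min (val (∑ i, k i • w i - v)) (val (∑ i, k' i • w i - v')) := by
            exact lt_min hk (hv' ▸ hk')
        _ ≤ _ := hmin _ _
    have h2 : val v < val (-(v - v')) := by rw [hneg]; exact hclose
    calc val (w j) = val v := (hvw j).symm
      _ < min _ _ := lt_min h1 h2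
      _ ≤ _ := hmin _ _
  intro i
  exact sub_eq_zero.mp (key i)
end
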